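/- arXiv:2111.00602 — 4 statements merged into one kernel-verified Lean document; each statement's English description precedes it below -/
import Mathlib

section
/- Let k ≥ 1 and let s_i = (log^(i) n)^6 for i ∈ [1,k], where log^(i) is the iterated logarithm. Then the sum Σ_{i=0}^{k-1} (1/(log^(i+1) n)^2) · log₂((log^(i) n)^6) is at most C · log^(k+1) n for some absolute constant C, for all sufficiently large n. -/
/-!
Writing `Lᵢ = log^(i) n`, the `i`-th summand is `6 log₂ Lᵢ / Lᵢ₊₁² ≤ 12 / Lᵢ₊₁`, since
`log₂ Lᵢ < ⌊log₂ Lᵢ⌋ + 1 ≤ 2 Lᵢ₊₁`. While `Lᵢ ≥ 2` we have `2 Lᵢ₊₁ ≤ Lᵢ`, so these bounds at least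
double from one summand to the next and the first `k` summands add up to at most `24 / Lₖ ≤ 24`;
once `Lᵢ = 1` all later summands vanish.
-/

def iterLog : ℕ → ℕ → ℕ
  | 0, n => n
  | i + 1, n => max (Nat.log 2 (iterLog i n)) 1

theorem iterLog_succ (i n : ℕ) : iterLog (i + 1) n = iterLog 1 (iterLog i n) := rfl

theorem one_le_iterLog_succ (i n : ℕ) : 1 ≤ iterLog (i + 1) n := le_max_right _ _

theorem logb_two_lt_iterLog_one_add_one (m : ℕ) : Real.logb 2 m < iterLog 1 m + 1 := by
  have hfloor := Nat.lt_floor_add_one (Real.logb ((2 : ℕ) : ℝ) m)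
  rw [Real.natFloor_logb_natCast, Nat.cast_ofNat] at hfloor
  have hlog : (Nat.log 2 m : ℝ) ≤ iterLog 1 m := by exact_mod_cast le_max_left _ _
  linarith

theorem two_mul_le_two_pow {t : ℕ} (ht : 1 ≤ t) : 2 * t ≤ 2 ^ t := by
  obtain ⟨s, rfl⟩ := Nat.exists_eq_add_of_le' ht
  have := Nat.lt_two_pow_self (n := s)
  rw [pow_succ]
  omega

theorem two_mul_iterLog_one_le {m : ℕ} (hm : 2 ≤ m) : 2 * iterLog 1 m ≤ m := by
  have hlog : 1 ≤ Nat.log 2 m := Nat.le_log_of_pow_le one_lt_two (by simpa using hm)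
  calc 2 * iterLog 1 m = 2 * Nat.log 2 m := by rw [iterLog, iterLog, max_eq_left hlog]
    _ ≤ 2 ^ Nat.log 2 m := two_mul_le_two_pow hlog
    _ ≤ m := Nat.pow_log_le_self 2 (by omega)

theorem one_div_sq_iterLog_one_mul_logb_le (m : ℕ) :
    1 / (iterLog 1 m : ℝ) ^ 2 * Real.logb 2 ((m : ℝ) ^ 6) ≤ 12 / iterLog 1 m := by
  have hL : (1 : ℝ) ≤ iterLog 1 m := by exact_mod_cast one_le_iterLog_succ 0 m
  have hlog := logb_two_lt_iterLog_one_add_one m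
  rw [Real.logb_pow, div_mul_eq_mul_div, one_mul, div_le_div_iff₀ (by positivity) (by positivity)]
  push_cast
  nlinarith

theorem sum_one_div_sq_iterLog_mul_logb_le (n k : ℕ) :
    ∑ i ∈ Finset.range (k + 1),
        (1 / ((iterLog (i + 1) n : ℝ)) ^ 2) * Real.logb 2 (((iterLog i n : ℝ)) ^ 6)
      ≤ 24 / (iterLog (k + 1) n : ℝ) := by
  induction k with
  | zero =>
    rw [Finset.sum_range_one]
    calc _ ≤ 12 / (iterLog 1 n : ℝ) := one_div_sq_iterLog_one_mul_logb_le n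
      _ ≤ 24 / (iterLog 1 n : ℝ) := by gcongr; norm_num
  | succ k ih =>
    rw [Finset.sum_range_succ, iterLog_succ (k + 1)]
    obtain ⟨L, hL⟩ : ∃ L, iterLog (k + 1) n = L := ⟨_, rfl⟩
    rw [hL] at ih ⊢
    rcases Nat.lt_or_ge L 2 with hL1 | hL2
    · obtain rfl : L = 1 := le_antisymm (by omega) (hL ▸ one_le_iterLog_succ k n)
      simpa [show iterLog 1 1 = 1 from rfl] using ih
    · have hhalf : (24 : ℝ) / L ≤ 12 / iterLog 1 L := by
        have hle : ((2 * iterLog 1 L : ℕ) : ℝ) ≤ L := by exact_mod_cast two_mul_iterLog_one_le hL2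
        have : (1 : ℝ) ≤ iterLog 1 L := by exact_mod_cast one_le_iterLog_succ 0 L
        rw [div_le_div_iff₀ (by positivity) (by positivity)]
        push_cast at hle
        linarith
      have hterm := one_div_sq_iterLog_one_mul_logb_le L
      have hsplit : (24 : ℝ) / iterLog 1 L = 12 / iterLog 1 L + 12 / iterLog 1 L := by ring
      linarith

theorem stmt4 : ∃ C : ℝ, 0 < C ∧ ∃ N : ℕ, ∀ n : ℕ, N ≤ n → ∀ k : ℕ, 1 ≤ k →
    ∑ i ∈ Finset.range k,
        (1 / ((iterLog (i + 1) n : ℝ)) ^ 2) * Real.logb 2 (((iterLog i n : ℝ)) ^ 6)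
      ≤ C * (iterLog (k + 1) n : ℝ) := by
  refine ⟨24, by norm_num, 0, fun n _ k hk => ?_⟩
  obtain ⟨j, rfl⟩ := Nat.exists_eq_add_of_le' hk
  have hlast : (1 : ℝ) ≤ iterLog (j + 1) n := by exact_mod_cast one_le_iterLog_succ j n
  have hnext : (1 : ℝ) ≤ iterLog (j + 1 + 1) n := by exact_mod_cast one_le_iterLog_succ (j + 1) n
  calc _ ≤ 24 / (iterLog (j + 1) n : ℝ) := sum_one_div_sq_iterLog_mul_logb_le n j
    _ ≤ 24 := div_le_self (by norm_num) hlast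
    _ ≤ 24 * (iterLog (j + 1 + 1) n : ℝ) := le_mul_of_one_le_right (by norm_num) hnext
end

section
/- Let x₁, ..., x_n be a sequence of keys and let f map each key independently and uniformly at random to one of m = n/ε fingerprints, where ε ∈ (0,1) and n/ε is a positive integer. Let Y_i be the indicator that f(x_i) = f(x_j) for some j < i, and let D = |{i : ∃ j ≠ i, f(x_i) = f(x_j)}|. Then D ≤ 2·Σᵢ Yᵢ, E[Σᵢ Yᵢ] ≤ ε·n, and Pr[D ≥ C(ε·n + log n)] ≤ n^{-Ω(1)} for a suitable absolute constant C. -/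
/-!
Every index that collides with another one is either a repeat (it collides with an earlier index)
or the first occurrence of a value that is repeated later, so `D ≤ 2 ∑ Yᵢ`.

For the repeats, a function `g : Fin n → Fin m` with a repeat at every index of a set `S` is
determined by an earlier witness for each `i ∈ S` and by its values off `S`; hence all indices of
`S` are repeats with probability at most `(n / m) ^ #S = ε ^ #S`. Summing over `S = {i}` bounds
the expectation by `n ε`, and a union bound over the `k`-subsets gives
`P(∑ Yᵢ ≥ k) ≤ C(n, k) ε ^ k ≤ (εn)^k / k! ≤ exp (2εn) 2^(-k)`, which is at most `1 / n` once
`k ≥ 6 (εn + log n)`.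
-/

open Finset MeasureTheory ProbabilityTheory Real
open scoped ENNReal

section Collisions

open scoped Classical

variable {ι β : Type*} [Fintype ι] [LinearOrder ι] [Fintype β]

noncomputable def collidingIndices (g : ι → β) : Finset ι :=
  univ.filter fun i => ∃ j, j ≠ i ∧ g j = g i

noncomputable def repeatIndices (g : ι → β) : Finset ι :=
  univ.filter fun i => ∃ j < i, g j = g i

omit [Fintype β] in
theorem card_collidingIndices_le_two_mul (g : ι → β) :
    #(collidingIndices g) ≤ 2 * #(repeatIndices g) := by
  let firstOccurrence (j : ι) : ι := (univ.filter fun k => g k = g j).min' ⟨j, by simp⟩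
  have hsub : collidingIndices g ⊆ repeatIndices g ∪ (repeatIndices g).image firstOccurrence := by
    intro i hi
    simp only [collidingIndices, mem_filter, mem_univ, true_and] at hi
    obtain ⟨j, hji, hgj⟩ := hi
    by_cases hrep : i ∈ repeatIndices g
    · exact mem_union_left _ hrep
    · simp only [repeatIndices, mem_filter, mem_univ, true_and, not_exists, not_and] at hrep
      have hij : i < j := lt_of_le_of_ne (not_lt.mp fun h => hrep j h hgj) hji.symm
      have hj : j ∈ repeatIndices g := by simpa [repeatIndices] using ⟨i, hij, hgj.symm⟩
      refine mem_union_right _ (mem_image.mpr ⟨j, hj, ?_⟩)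
      refine le_antisymm (min'_le _ _ (by simp [hgj])) (le_min' _ _ _ fun k hk => ?_)
      simp only [mem_filter, mem_univ, true_and] at hk
      exact not_lt.mp fun hki => hrep k hki (hk.trans hgj)
  calc #(collidingIndices g) ≤ #(repeatIndices g) + #((repeatIndices g).image firstOccurrence) :=
        (card_le_card hsub).trans (card_union_le _ _)
    _ ≤ 2 * #(repeatIndices g) := by
        have := card_image_le (s := repeatIndices g) (f := firstOccurrence)
        omega

theorem card_subset_repeatIndices_mul_le (S : Finset ι) :
    #(univ.filter fun g : ι → β => S ⊆ repeatIndices g) * Fintype.card β ^ #S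
      ≤ Fintype.card ι ^ #S * Fintype.card β ^ Fintype.card ι := by
  let earlier (g : ι → β) (i : ι) : ι := if h : ∃ j < i, g j = g i then h.choose else i
  let encode (g : {g : ι → β // S ⊆ repeatIndices g}) : (S → ι) × (↥Sᶜ → β) :=
    (fun i => earlier g i, fun i => g.1 i)
  have hencode : Function.Injective encode := by
    rintro ⟨g₁, hg₁⟩ ⟨g₂, hg₂⟩ heq
    simp only [encode, Prod.mk.injEq, funext_iff, Subtype.forall] at heq
    obtain ⟨hearlier, hoff⟩ := heq
    suffices ∀ i, g₁ i = g₂ i from Subtype.ext (funext this)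
    intro i
    induction i using WellFoundedLT.induction with
    | _ i ih =>
      by_cases hi : i ∈ S
      · have h₁ : ∃ j < i, g₁ j = g₁ i := by simpa [repeatIndices] using hg₁ hi
        have h₂ : ∃ j < i, g₂ j = g₂ i := by simpa [repeatIndices] using hg₂ hi
        have he : h₁.choose = h₂.choose := by simpa [earlier, h₁, h₂] using hearlier i hi
        calc g₁ i = g₁ h₁.choose := h₁.choose_spec.2.symm
          _ = g₂ h₁.choose := ih _ h₁.choose_spec.1
          _ = g₂ i := he ▸ h₂.choose_spec.2
      · exact hoff i (mem_compl.mpr hi)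
  have hcard := Fintype.card_le_of_injective encode hencode
  rw [Fintype.card_prod, Fintype.card_fun, Fintype.card_fun, Fintype.card_coe, Fintype.card_coe,
    Fintype.card_subtype] at hcard
  calc _ ≤ Fintype.card ι ^ #S * Fintype.card β ^ #Sᶜ * Fintype.card β ^ #S :=
        Nat.mul_le_mul_right _ hcard
    _ = _ := by rw [mul_assoc, ← pow_add, card_compl, Nat.sub_add_cancel (card_le_univ S)]

theorem card_le_card_repeatIndices_mul_le (k : ℕ) :
    #(univ.filter fun g : ι → β => k ≤ #(repeatIndices g)) * Fintype.card β ^ k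
      ≤ (Fintype.card ι).choose k * Fintype.card ι ^ k * Fintype.card β ^ Fintype.card ι := by
  have hsub : univ.filter (fun g : ι → β => k ≤ #(repeatIndices g)) ⊆
      (powersetCard k univ).biUnion fun S => univ.filter fun g => S ⊆ repeatIndices g := by
    intro g hg
    obtain ⟨S, hS, hSk⟩ := exists_subset_card_eq (mem_filter.mp hg).2
    exact mem_biUnion.mpr ⟨S, mem_powersetCard.mpr ⟨subset_univ S, hSk⟩, by simpa using hS⟩
  calc _ ≤ (∑ S ∈ powersetCard k univ, #(univ.filter fun g : ι → β => S ⊆ repeatIndices g))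
          * Fintype.card β ^ k :=
        Nat.mul_le_mul_right _ ((card_le_card hsub).trans card_biUnion_le)
    _ ≤ ∑ _S ∈ powersetCard k (univ : Finset ι),
          Fintype.card ι ^ k * Fintype.card β ^ Fintype.card ι := by
        rw [sum_mul]
        refine sum_le_sum fun S hS => ?_
        rw [← (mem_powersetCard.mp hS).2]
        exact card_subset_repeatIndices_mul_le S
    _ = _ := by rw [sum_const, card_powersetCard, card_univ, smul_eq_mul, mul_assoc]

theorem sum_card_repeatIndices_mul_le :
    (∑ g : ι → β, #(repeatIndices g)) * Fintype.card β
      ≤ Fintype.card ι * Fintype.card ι * Fintype.card β ^ Fintype.card ι := by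
  have hswap : ∑ g : ι → β, #(repeatIndices g)
      = ∑ i : ι, #(univ.filter fun g : ι → β => {i} ⊆ repeatIndices g) := by
    simp only [singleton_subset_iff, card_filter]
    rw [sum_comm]
    simp
  calc _ = ∑ i : ι, #(univ.filter fun g : ι → β => {i} ⊆ repeatIndices g) * Fintype.card β := by
        rw [hswap, sum_mul]
    _ ≤ ∑ _i : ι, Fintype.card ι * Fintype.card β ^ Fintype.card ι :=
        sum_le_sum fun i _ => by simpa using card_subset_repeatIndices_mul_le (β := β) {i}
    _ = _ := by rw [sum_const, card_univ, smul_eq_mul, mul_assoc]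

end Collisions

-- `V` need not be measurable: the fibres are replaced by measurable hulls of the same measure.
theorem integral_comp_le_sum_mul_measureReal {Ω α : Type*} [MeasurableSpace Ω] {μ : Measure Ω}
    [IsFiniteMeasure μ] [Fintype α] (V : Ω → α) {c : α → ℝ} (hc : 0 ≤ c) :
    ∫ ω, c (V ω) ∂μ ≤ ∑ a, c a * μ.real (V ⁻¹' {a}) := by
  by_cases hint : Integrable (fun ω => c (V ω)) μ
  · let fiber (a : α) : Set Ω := toMeasurable μ (V ⁻¹' {a})
    have hterm (a : α) : Integrable (fun ω => c a * (fiber a).indicator 1 ω) μ :=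
      ((integrable_const 1).indicator (measurableSet_toMeasurable μ _)).const_mul _
    calc ∫ ω, c (V ω) ∂μ ≤ ∫ ω, ∑ a, c a * (fiber a).indicator 1 ω ∂μ := by
          refine integral_mono hint (integrable_finsetSum _ fun a _ => hterm a) fun ω => ?_
          have hmem : ω ∈ fiber (V ω) := subset_toMeasurable μ _ rfl
          calc c (V ω) = c (V ω) * (fiber (V ω)).indicator 1 ω := by simp [hmem]
            _ ≤ _ := single_le_sum (f := fun a => c a * (fiber a).indicator 1 ω)
                (fun a _ => mul_nonneg (hc a) (Set.indicator_nonneg (fun _ _ => zero_le_one) ω))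
                (mem_univ _)
      _ = ∑ a, c a * μ.real (V ⁻¹' {a}) := by
          rw [integral_finsetSum _ fun a _ => hterm a]
          refine sum_congr rfl fun a _ => ?_
          rw [integral_const_mul, integral_indicator_one (measurableSet_toMeasurable μ _),
            Measure.real, measure_toMeasurable, Measure.real]
  · rw [integral_undef hint]
    exact sum_nonneg fun a _ => mul_nonneg (hc a) measureReal_nonneg

section IndependentUniform

variable {Ω ι β : Type*} [MeasurableSpace Ω] {μ : Measure Ω} [Fintype ι]
  [MeasurableSpace β] [MeasurableSingletonClass β] {f : ι → Ω → β} {q : ℝ≥0∞}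

theorem measure_forall_eq_eq_pow (hf : iIndepFun f μ) (hq : ∀ i v, μ {ω | f i ω = v} = q)
    (g : ι → β) : μ {ω | ∀ i, f i ω = g i} = q ^ Fintype.card ι := by
  have hset : {ω | ∀ i, f i ω = g i} = ⋂ i ∈ univ, f i ⁻¹' {g i} := by ext; simp
  rw [hset, hf.measure_inter_preimage_eq_mul univ fun i _ => measurableSet_singleton (g i)]
  simp [Set.preimage, hq]

theorem measure_comp_le_card_mul [DecidableEq ι] [Fintype β] (hf : iIndepFun f μ)
    (hq : ∀ i v, μ {ω | f i ω = v} = q) (p : (ι → β) → Prop) [DecidablePred p] :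
    μ {ω | p fun i => f i ω} ≤ #(univ.filter p) * q ^ Fintype.card ι := by
  have hsub : {ω | p fun i => f i ω} ⊆ ⋃ g ∈ univ.filter p, {ω | ∀ i, f i ω = g i} :=
    fun ω hω => Set.mem_biUnion (mem_filter.mpr ⟨mem_univ _, hω⟩) fun _ => rfl
  calc μ {ω | p fun i => f i ω} ≤ ∑ g ∈ univ.filter p, μ {ω | ∀ i, f i ω = g i} :=
        (measure_mono hsub).trans (measure_biUnion_finset_le _ _)
    _ = _ := by simp [measure_forall_eq_eq_pow hf hq]

theorem integral_comp_le_sum_mul [DecidableEq ι] [Fintype β] [IsFiniteMeasure μ]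
    (hf : iIndepFun f μ) (hq : ∀ i v, μ {ω | f i ω = v} = q) {c : (ι → β) → ℝ} (hc : 0 ≤ c) :
    ∫ ω, c (fun i => f i ω) ∂μ ≤ (∑ g, c g) * q.toReal ^ Fintype.card ι := by
  refine (integral_comp_le_sum_mul_measureReal (fun ω i => f i ω) hc).trans_eq ?_
  rw [sum_mul]
  refine sum_congr rfl fun g _ => ?_
  have hfiber : (fun ω i => f i ω) ⁻¹' {g} = {ω | ∀ i, f i ω = g i} := by ext; simp [funext_iff]
  rw [Measure.real, hfiber, measure_forall_eq_eq_pow hf hq, ENNReal.toReal_pow]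

end IndependentUniform

theorem choose_mul_pow_le_inv {n k : ℕ} {ε : ℝ} (hn : 0 < n) (hε : 0 ≤ ε)
    (hk : 6 * (n * ε + log n) ≤ k) : n.choose k * ε ^ k ≤ (n : ℝ)⁻¹ := by
  have hnR : (0 : ℝ) < n := by exact_mod_cast hn
  have hlog2 : 0.6931471803 < log 2 := log_two_gt_d9
  have hlogn : 0 ≤ log n := log_nonneg (by exact_mod_cast hn)
  have hhalf : ((1 : ℝ) / 2) ^ k = exp (-(k * log 2)) := by
    rw [exp_neg, exp_nat_mul, exp_log two_pos, one_div, inv_pow]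
  calc n.choose k * ε ^ k ≤ n ^ k / k.factorial * ε ^ k := by
        gcongr; exact Nat.choose_le_pow_div k n
    _ = (2 * n * ε) ^ k / k.factorial * (1 / 2) ^ k := by
        rw [mul_pow, mul_pow, div_pow, one_pow]; field_simp
    _ ≤ exp (2 * n * ε) * exp (-(k * log 2)) := by
        rw [hhalf]; gcongr; exact pow_div_factorial_le_exp _ (by positivity) k
    _ = exp (2 * n * ε - k * log 2) := by rw [← exp_add]; ring_nf
    _ ≤ exp (-log n) := exp_le_exp.mpr (by nlinarith)
    _ = (n : ℝ)⁻¹ := by rw [exp_neg, exp_log hnR]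

section UniformHashing

variable {Ω ι β : Type*} [MeasurableSpace Ω] {μ : Measure Ω} [Fintype ι] [LinearOrder ι]
  [Fintype β] [Nonempty β] [MeasurableSpace β] [MeasurableSingletonClass β] {f : ι → Ω → β}

theorem measure_le_card_repeatIndices_le (hf : iIndepFun f μ)
    (hunif : ∀ i v, μ {ω | f i ω = v} = (Fintype.card β : ℝ≥0∞)⁻¹) (k : ℕ) :
    μ {ω | k ≤ #(repeatIndices fun i => f i ω)}
      ≤ ENNReal.ofReal ((Fintype.card ι).choose k
          * ((Fintype.card ι : ℝ) / Fintype.card β) ^ k) := by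
  have hmeas := measure_comp_le_card_mul hf hunif fun g => k ≤ #(repeatIndices g)
  have hcount := card_le_card_repeatIndices_mul_le (ι := ι) (β := β) k
  set n := Fintype.card ι
  set m := Fintype.card β
  have hm : (0 : ℝ) < m := by exact_mod_cast Fintype.card_pos
  set N := #(univ.filter fun g : ι → β => k ≤ #(repeatIndices g))
  have hcountR : (N : ℝ) * m ^ k ≤ n.choose k * n ^ k * m ^ n := by exact_mod_cast hcount
  calc _ ≤ N * (m : ℝ≥0∞)⁻¹ ^ n := hmeas
    _ = ENNReal.ofReal (N * (m : ℝ)⁻¹ ^ n) := by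
        rw [ENNReal.ofReal_mul (Nat.cast_nonneg _), ENNReal.ofReal_natCast,
          ENNReal.ofReal_pow (by positivity), ENNReal.ofReal_inv_of_pos hm, ENNReal.ofReal_natCast]
    _ ≤ _ := by
        refine ENNReal.ofReal_le_ofReal ?_
        rw [inv_pow, ← div_eq_mul_inv, div_pow, div_le_iff₀ (by positivity)]
        field_simp
        linarith

theorem integral_card_repeatIndices_le [IsFiniteMeasure μ] (hf : iIndepFun f μ)
    (hunif : ∀ i v, μ {ω | f i ω = v} = (Fintype.card β : ℝ≥0∞)⁻¹) :
    ∫ ω, (#(repeatIndices fun i => f i ω) : ℝ) ∂μ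
      ≤ Fintype.card ι * ((Fintype.card ι : ℝ) / Fintype.card β) := by
  set n := Fintype.card ι
  set m := Fintype.card β
  have hm : (0 : ℝ) < m := by exact_mod_cast Fintype.card_pos
  have hcount : (∑ g : ι → β, (#(repeatIndices g) : ℝ)) * m ≤ n * n * m ^ n := by
    exact_mod_cast sum_card_repeatIndices_mul_le
  calc _ ≤ (∑ g : ι → β, (#(repeatIndices g) : ℝ)) * ((m : ℝ≥0∞)⁻¹).toReal ^ n :=
        integral_comp_le_sum_mul hf hunif fun g => Nat.cast_nonneg _
    _ ≤ _ := by
        rw [ENNReal.toReal_inv, ENNReal.toReal_natCast, inv_pow, ← div_eq_mul_inv,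
          div_le_iff₀ (by positivity)]
        field_simp
        linarith

end UniformHashing

open scoped Classical in
theorem stmt12 : ∃ C c : ℝ, 0 < C ∧ 0 < c ∧ ∃ N : ℕ, ∀ n : ℕ, N ≤ n →
    ∀ ε : ℝ, 0 < ε → ε < 1 → ∀ m : ℕ, (m : ℝ) = n / ε →
    ∀ (Ω : Type) (_ : MeasurableSpace Ω) (μ : Measure Ω), IsProbabilityMeasure μ →
    ∀ f : Fin n → Ω → Fin m,
    iIndepFun f μ →
    (∀ (i : Fin n) (v : Fin m), μ {ω | f i ω = v} = (m : ENNReal)⁻¹) →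
    ((∀ ω, ((Finset.univ.filter
          (fun i : Fin n => ∃ j, j ≠ i ∧ f j ω = f i ω)).card : ℝ)
        ≤ 2 * ∑ i : Fin n, (if ∃ j < i, f j ω = f i ω then (1 : ℝ) else 0)) ∧
      (∫ ω, (∑ i : Fin n, (if ∃ j < i, f j ω = f i ω then (1 : ℝ) else 0)) ∂μ)
        ≤ ε * n ∧
      μ {ω | C * (ε * n + Real.log n) ≤
            ((Finset.univ.filter
              (fun i : Fin n => ∃ j, j ≠ i ∧ f j ω = f i ω)).card : ℝ)}
        ≤ ENNReal.ofReal ((n : ℝ) ^ (-c))) := by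
  refine ⟨12, 1, by norm_num, by norm_num, 1, ?_⟩
  intro n hn ε hε0 _ m hm Ω _ μ hμ f hf hunif
  have hε : ε = n / m := by rw [hm]; field_simp
  have hm0 : 0 < m := by exact_mod_cast (show (0 : ℝ) < m by rw [hm]; positivity)
  have : Nonempty (Fin m) := ⟨⟨0, hm0⟩⟩
  have hunif' : ∀ i v, μ {ω | f i ω = v} = (Fintype.card (Fin m) : ℝ≥0∞)⁻¹ := by simpa using hunif
  -- `congr` reconciles the statement's `Decidable` instances with those of the definitions.
  have hrep (ω : Ω) : ∑ i : Fin n, (if ∃ j < i, f j ω = f i ω then (1 : ℝ) else 0)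
      = #(repeatIndices fun i => f i ω) := by
    rw [sum_boole, repeatIndices]; congr
  have hcoll (ω : Ω) : #(univ.filter fun i : Fin n => ∃ j, j ≠ i ∧ f j ω = f i ω)
      = #(collidingIndices fun i => f i ω) := by
    rw [collidingIndices]; congr
  refine ⟨fun ω => ?_, ?_, ?_⟩
  · rw [hrep, hcoll]
    exact_mod_cast card_collidingIndices_le_two_mul _
  · simp_rw [hrep]
    simpa [hε, mul_comm] using integral_card_repeatIndices_le hf hunif'
  · set k := ⌈6 * (n * ε + log n)⌉₊
    calc _ ≤ μ {ω | k ≤ #(repeatIndices fun i => f i ω)} := by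
          refine measure_mono fun ω hω => Nat.ceil_le.mpr ?_
          have htwice : (#(collidingIndices fun i => f i ω) : ℝ)
              ≤ 2 * #(repeatIndices fun i => f i ω) := by
            exact_mod_cast card_collidingIndices_le_two_mul _
          rw [Set.mem_ofPred_eq, hcoll] at hω
          linarith
      _ ≤ ENNReal.ofReal (n.choose k * ((n : ℝ) / m) ^ k) := by
          simpa using measure_le_card_repeatIndices_le hf hunif' k
      _ ≤ ENNReal.ofReal ((n : ℝ) ^ (-1 : ℝ)) := by
          refine ENNReal.ofReal_le_ofReal ?_
          rw [rpow_neg_one, ← hε]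
          exact choose_mul_pow_le_inv hn hε0.le (Nat.le_ceil _)
end

section
/- Let q : ℕ → [n] → ℝ_{≥0} be defined from probe sequences by q(s, j) = n·Pr_{x∈U}[∃ i ≤ s, h'_i(x) = j], where h' is constructed so that a ball x can reach slot j within its first i probes only if s(x,j) ≤ i and q₀(s(x,j), j) ≤ i, with q₀(s,j) = n·Pr_{x∈U}[∃ i ≤ s, h_i(x) = j]. Then q(i, j) ≤ i² for all i ≥ 1 and j ∈ [n]. -/
/-!
Ball `x` can reach slot `j` within `i` probes of `h'` only if its first `h`-probe of `j`
happens at some step `k = s x j ≤ i` with `q₀(k, j) ≤ i`. Since `h_k(x) = j` there, the balls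
with `s x j = k` form a subset of those counted by `q₀(k, j)`, so each of the at most `i`
admissible values of `k` contributes density at most `i`, and the union bound gives `i²`.
-/

open scoped Classical in
/-- `q(h, i, j) = n · Pr_{x ∈ U}[∃ r ≤ i, h_r(x) = j]` (probe indices start at 1). -/
noncomputable def qfun {U : Type*} [Fintype U] (n : ℕ) (h : U → ℕ → Option (Fin n))
    (i : ℕ) (j : Fin n) : ℝ :=
  (n : ℝ) * ((Finset.univ.filter
      (fun x : U => ∃ r ∈ Finset.Icc 1 i, h x r = some j)).card : ℝ) /
    (Fintype.card U)

open Finset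

section Density

variable {U : Type*} [Fintype U] (n : ℕ)

noncomputable def scaledDensity (S : Finset U) : ℝ := n * #S / Fintype.card U

variable {n}

theorem scaledDensity_mono {S T : Finset U} (hST : S ⊆ T) :
    scaledDensity n S ≤ scaledDensity n T := by
  unfold scaledDensity
  gcongr

theorem scaledDensity_biUnion_le {ι : Type*} [DecidableEq U] (I : Finset ι) (A : ι → Finset U) :
    scaledDensity n (I.biUnion A) ≤ ∑ k ∈ I, scaledDensity n (A k) := by
  simp only [scaledDensity, ← sum_div, ← mul_sum]
  gcongr
  exact_mod_cast card_biUnion_le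

end Density

open scoped Classical in
noncomputable def hitSet {U : Type*} [Fintype U] {n : ℕ} (h : U → ℕ → Option (Fin n))
    (i : ℕ) (j : Fin n) : Finset U :=
  univ.filter fun x => ∃ r ∈ Icc 1 i, h x r = some j

theorem qfun_eq_scaledDensity_hitSet {U : Type*} [Fintype U] (n : ℕ)
    (h : U → ℕ → Option (Fin n)) (i : ℕ) (j : Fin n) :
    qfun n h i j = scaledDensity n (hitSet h i j) :=
  rfl

theorem filter_firstProbe_eq_subset_hitSet {U : Type*} [Fintype U] {n : ℕ}
    {h : U → ℕ → Option (Fin n)} {s : U → Fin n → ℕ}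
    (hfirst : ∀ (x : U) (j : Fin n), 1 ≤ s x j ∧ h x (s x j) = some j) (j : Fin n) (k : ℕ) :
    univ.filter (fun x => s x j = k) ⊆ hitSet h k j := by
  intro x hx
  obtain rfl := (mem_filter.1 hx).2
  simp only [hitSet, mem_filter, mem_univ, true_and]
  exact ⟨s x j, mem_Icc.2 ⟨(hfirst x j).1, le_rfl⟩, (hfirst x j).2⟩

theorem stmt18_general {U : Type*} [Fintype U] (n : ℕ)
    (h h' : U → ℕ → Option (Fin n)) (s : U → Fin n → ℕ)
    (hfirst : ∀ (x : U) (j : Fin n), 1 ≤ s x j ∧ h x (s x j) = some j)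
    (hconstruct : ∀ (x : U) (j : Fin n) (i : ℕ),
      (∃ r ∈ Finset.Icc 1 i, h' x r = some j) →
        s x j ≤ i ∧ qfun n h (s x j) j ≤ (i : ℝ)) :
    ∀ i : ℕ, 1 ≤ i → ∀ j : Fin n, qfun n h' i j ≤ (i : ℝ) ^ 2 := by
  classical
  intro i _ j
  set K := (Icc 1 i).filter fun k => qfun n h k j ≤ i
  have hcover : hitSet h' i j ⊆ K.biUnion fun k => univ.filter fun x => s x j = k := by
    intro x hx
    simp only [hitSet, mem_filter, mem_univ, true_and] at hx
    obtain ⟨hle, hq⟩ := hconstruct x j i hx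
    exact mem_biUnion.2 ⟨s x j, mem_filter.2 ⟨mem_Icc.2 ⟨(hfirst x j).1, hle⟩, hq⟩,
      mem_filter.2 ⟨mem_univ x, rfl⟩⟩
  calc qfun n h' i j
      = scaledDensity n (hitSet h' i j) := qfun_eq_scaledDensity_hitSet n h' i j
    _ ≤ ∑ k ∈ K, scaledDensity n (univ.filter fun x => s x j = k) :=
        (scaledDensity_mono hcover).trans (scaledDensity_biUnion_le _ _)
    _ ≤ ∑ _k ∈ K, (i : ℝ) := sum_le_sum fun k hk => calc
        _ ≤ scaledDensity n (hitSet h k j) :=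
          scaledDensity_mono (filter_firstProbe_eq_subset_hitSet hfirst j k)
        _ = qfun n h k j := (qfun_eq_scaledDensity_hitSet n h k j).symm
        _ ≤ i := (mem_filter.1 hk).2
    _ ≤ (i : ℝ) ^ 2 := by
        have hK : #K ≤ i := (card_filter_le _ _).trans (by simp)
        rw [sum_const, nsmul_eq_mul, sq]
        gcongr

theorem stmt18 {U : Type*} [Fintype U] [Nonempty U] (n : ℕ) (hn : 1 ≤ n)
    (h h' : U → ℕ → Option (Fin n)) (s : U → Fin n → ℕ)
    (hfirst : ∀ (x : U) (j : Fin n), 1 ≤ s x j ∧ h x (s x j) = some j)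
    (hconstruct : ∀ (x : U) (j : Fin n) (i : ℕ),
      (∃ r ∈ Finset.Icc 1 i, h' x r = some j) →
        s x j ≤ i ∧ qfun n h (s x j) j ≤ (i : ℝ)) :
    ∀ i : ℕ, 1 ≤ i → ∀ j : Fin n, qfun n h' i j ≤ (i : ℝ) ^ 2 :=
  stmt18_general n h h' s hfirst hconstruct
end

section
/- Suppose balls are hashed independently and uniformly to n/s bins of capacity s = (log^{(i+1)} n)^6, and each ball y independently survives (i.e., has hash level s(y) ≥ i+1) with probability 1 − 1/(log^{(i+1)} n)². If at most n balls are present, then the probability that a fixed bin receives at least s surviving balls is at most exp(−Ω((log^{(i+1)} n)²)). -/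
/-!
For `λ ≥ 0`, `(1 + λ) ^ #{surviving balls in the bin} = ∑_{S ⊆ those balls} λ ^ #S`, and the
expectation of the right-hand side only involves the probabilities that all balls of `S` land in
the bin and survive, which independence makes `q ^ #S` with `q = (1 - 1/L²)/m`. The hash functions
are not assumed measurable, so these events are replaced by measurable hulls of the same measure.
Markov's inequality then gives `exp ((e^t - 1) q N - t s)` for `1 + λ = e^t`, and `t = 1/(2L²)`
together with `q N ≤ s (1 - 1/L²)` makes the exponent at most `-s/(4L⁴) = -L²/4`.
-/

open MeasureTheory ProbabilityTheory

open Finset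
open scoped ENNReal

section CorrelatedEvents

variable {Ω ι : Type*} [MeasurableSpace Ω] [Fintype ι] {μ : Measure Ω} {A : ι → Set Ω}

open Classical in
theorem add_one_pow_card_le_sum_indicator (l : ℝ≥0∞) (ω : Ω) :
    (1 + l) ^ #{i | ω ∈ A i} ≤
      ∑ S : Finset ι, l ^ #S * (toMeasurable μ (⋂ i ∈ S, A i)).indicator 1 ω := by
  set K : Finset ι := {i | ω ∈ A i}
  calc (1 + l) ^ #K = ∑ S ∈ K.powerset, l ^ #S := by
        rw [add_comm, ← sum_pow_mul_eq_add_pow]; simp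
    _ = ∑ S ∈ K.powerset, l ^ #S * (toMeasurable μ (⋂ i ∈ S, A i)).indicator 1 ω := by
        refine sum_congr rfl fun S hS => ?_
        have hω : ω ∈ toMeasurable μ (⋂ i ∈ S, A i) := by
          refine subset_toMeasurable _ _ (Set.mem_iInter₂.2 fun i hi => ?_)
          simpa [K] using mem_powerset.1 hS hi
        simp [hω]
    _ ≤ _ := sum_le_sum_of_subset (subset_univ _)

open Classical in
theorem measure_card_ge_le_div {l p : ℝ≥0∞} (hl : l ≠ ⊤)
    (h : ∀ S : Finset ι, μ (⋂ i ∈ S, A i) ≤ p ^ #S) (s : ℕ) :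
    μ {ω | s ≤ #{i | ω ∈ A i}} ≤ (1 + l * p) ^ Fintype.card ι / (1 + l) ^ s := by
  set f : Ω → ℝ≥0∞ :=
    fun ω => ∑ S : Finset ι, l ^ #S * (toMeasurable μ (⋂ i ∈ S, A i)).indicator 1 ω
  have hterm (S : Finset ι) :
      Measurable fun ω => l ^ #S * (toMeasurable μ (⋂ i ∈ S, A i)).indicator 1 ω :=
    (measurable_one.indicator (measurableSet_toMeasurable _ _)).const_mul _
  have hf : Measurable f := Finset.measurable_sum _ fun S _ => hterm S
  have hint : ∫⁻ ω, f ω ∂μ ≤ (1 + l * p) ^ Fintype.card ι :=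
    calc ∫⁻ ω, f ω ∂μ = ∑ S : Finset ι, l ^ #S * μ (⋂ i ∈ S, A i) := by
          rw [lintegral_finsetSum _ fun S _ => hterm S]
          refine sum_congr rfl fun S _ => ?_
          rw [lintegral_const_mul _ (measurable_one.indicator (measurableSet_toMeasurable _ _)),
            lintegral_indicator_one (measurableSet_toMeasurable _ _), measure_toMeasurable]
      _ ≤ ∑ S : Finset ι, (l * p) ^ #S := by
          gcongr with S; rw [mul_pow]; gcongr; exact h S
      _ = (1 + l * p) ^ Fintype.card ι := by
          rw [add_comm, ← card_univ, ← sum_pow_mul_eq_add_pow, powerset_univ]; simp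
  calc μ {ω | s ≤ #{i | ω ∈ A i}} ≤ μ {ω | (1 + l) ^ s ≤ f ω} :=
        measure_mono fun ω hω =>
          (pow_le_pow_right₀ le_self_add hω).trans (add_one_pow_card_le_sum_indicator l ω)
    _ ≤ (∫⁻ ω, f ω ∂μ) / (1 + l) ^ s :=
        meas_ge_le_lintegral_div hf.aemeasurable (by simp) (by simp [hl])
    _ ≤ _ := by gcongr

open Classical in
theorem measure_card_ge_le_exp {q t : ℝ} (hq : 0 ≤ q) (ht : 0 ≤ t)
    (h : ∀ S : Finset ι, μ (⋂ i ∈ S, A i) ≤ ENNReal.ofReal q ^ #S) (s : ℕ) :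
    μ {ω | s ≤ #{i | ω ∈ A i}} ≤
      ENNReal.ofReal (Real.exp ((Real.exp t - 1) * (q * Fintype.card ι) - t * s)) := by
  have hl : 0 ≤ Real.exp t - 1 := by linarith [Real.one_le_exp ht]
  have hmoment : (1 + (Real.exp t - 1) * q) ^ Fintype.card ι
      ≤ Real.exp ((Real.exp t - 1) * (q * Fintype.card ι)) := by
    calc (1 + (Real.exp t - 1) * q) ^ Fintype.card ι
        ≤ Real.exp ((Real.exp t - 1) * q) ^ Fintype.card ι := by
          gcongr
          linarith [Real.add_one_le_exp ((Real.exp t - 1) * q)]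
      _ = _ := by rw [← Real.exp_nat_mul]; ring_nf
  calc μ {ω | s ≤ #{i | ω ∈ A i}}
      ≤ (1 + ENNReal.ofReal (Real.exp t - 1) * ENNReal.ofReal q) ^ Fintype.card ι
          / (1 + ENNReal.ofReal (Real.exp t - 1)) ^ s :=
        measure_card_ge_le_div ENNReal.ofReal_ne_top h s
    _ = ENNReal.ofReal ((1 + (Real.exp t - 1) * q) ^ Fintype.card ι / Real.exp t ^ s) := by
        rw [ENNReal.ofReal_div_of_pos (by positivity), ENNReal.ofReal_pow (by positivity),
          ENNReal.ofReal_pow (by positivity), ENNReal.ofReal_add zero_le_one (by positivity),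
          ENNReal.ofReal_mul hl, ENNReal.ofReal_one, ← ENNReal.ofReal_one,
          ← ENNReal.ofReal_add zero_le_one hl, add_sub_cancel]
    _ ≤ _ := by
        rw [Real.exp_sub, ← Real.exp_nat_mul t, mul_comm (s : ℝ)]
        gcongr

end CorrelatedEvents

theorem chernoff_exponent_le {u x s : ℝ} (hu₀ : 0 ≤ u) (hu₁ : u ≤ 1) (hs : 0 ≤ s)
    (hx : x ≤ s * (1 - u)) :
    (Real.exp (u / 2) - 1) * x - u / 2 * s ≤ -(s * u ^ 2 / 4) := by
  have hexp := abs_le.1 (Real.abs_exp_sub_one_sub_id_le (x := u / 2)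
    (by rw [abs_of_nonneg (by positivity)]; linarith))
  have hl : 0 ≤ Real.exp (u / 2) - 1 := by linarith [Real.one_le_exp (by positivity : 0 ≤ u / 2)]
  calc (Real.exp (u / 2) - 1) * x - u / 2 * s
      ≤ (Real.exp (u / 2) - 1) * (s * (1 - u)) - u / 2 * s := by gcongr
    _ ≤ (u / 2 + (u / 2) ^ 2) * (s * (1 - u)) - u / 2 * s := by
        have : 0 ≤ s * (1 - u) := mul_nonneg hs (by linarith)
        gcongr
        linarith
    _ ≤ -(s * u ^ 2 / 4) := by nlinarith [mul_nonneg hs (pow_nonneg hu₀ 3)]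

open scoped Classical in
theorem stmt19 : ∃ c : ℝ, 0 < c ∧
    ∀ (n i N m L s : ℕ), L = iterLog (i + 1) n → 2 ≤ L → s = L ^ 6 →
      n = m * s → N ≤ n →
    ∀ (Ω : Type) (_ : MeasurableSpace Ω) (μ : Measure Ω), IsProbabilityMeasure μ →
    ∀ (H : Fin N → Ω → Fin m) (Z : Fin N → Ω → Bool),
      iIndepFun (fun y => fun ω => (H y ω, Z y ω)) μ →
      (∀ (y : Fin N) (b : Fin m),
        μ {ω | H y ω = b ∧ Z y ω = true} =
          ENNReal.ofReal ((1 / (m : ℝ)) * (1 - 1 / (L : ℝ) ^ 2))) →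
      ∀ b : Fin m,
        μ {ω | s ≤ (Finset.univ.filter
              (fun y : Fin N => H y ω = b ∧ Z y ω = true)).card}
          ≤ ENNReal.ofReal (Real.exp (-c * (L : ℝ) ^ 2)) := by
  refine ⟨1 / 4, by norm_num, ?_⟩
  intro n i N m L s _ hL hs hn hN Ω _ μ _ H Z hind hprob b
  have hm : (0 : ℝ) < m := by exact_mod_cast b.pos
  have hL' : (2 : ℝ) ≤ L := by exact_mod_cast hL
  set u : ℝ := 1 / (L : ℝ) ^ 2
  set q : ℝ := 1 / (m : ℝ) * (1 - u)
  have hu₀ : 0 ≤ u := by positivity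
  have hu₁ : u ≤ 1 := by rw [div_le_one (by positivity)]; nlinarith
  have hq : 0 ≤ q := mul_nonneg (by positivity) (by linarith)
  have hinter (S : Finset (Fin N)) :
      μ (⋂ y ∈ S, {ω | H y ω = b ∧ Z y ω = true}) ≤ ENNReal.ofReal q ^ #S := by
    have hpre (y : Fin N) : {ω | H y ω = b ∧ Z y ω = true} =
        (fun ω => (H y ω, Z y ω)) ⁻¹' {(b, true)} := by
      ext ω; simp [Prod.ext_iff]
    simp_rw [hpre, hind.measure_inter_preimage_eq_mul S fun _ _ => measurableSet_singleton _,
      ← hpre, hprob, prod_const, le_refl]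
  have hqN : q * (Fintype.card (Fin N) : ℝ) ≤ s * (1 - u) := by
    have hN' : (N : ℝ) ≤ m * s := by exact_mod_cast hn ▸ hN
    rw [Fintype.card_fin]
    calc q * N ≤ q * (m * s) := by gcongr
      _ = s * (1 - u) := by simp only [q]; field_simp
  calc _ ≤ ENNReal.ofReal (Real.exp ((Real.exp (u / 2) - 1) * (q * Fintype.card (Fin N))
          - u / 2 * s)) := by
        convert measure_card_ge_le_exp (t := u / 2) hq (by positivity) hinter s
        exact Iff.rfl
    _ ≤ ENNReal.ofReal (Real.exp (-(s * u ^ 2 / 4))) := by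
        gcongr
        exact chernoff_exponent_le hu₀ hu₁ (by positivity) hqN
    _ = ENNReal.ofReal (Real.exp (-(1 / 4) * (L : ℝ) ^ 2)) := by
        simp only [hs, u]; push_cast; field_simp
end
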